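/- arXiv:0911.1032 — 5 statements merged into one kernel-verified Lean document; each statement's English description precedes it below -/
import Mathlib

section
/- Suppose ρ_ε is a smooth family of stationary probability densities for generators L_ε on a finite state space with ρ_ε = ρ0(1 + εh1 + o(ε)), where L0 satisfies detailed balance with respect to ρ0 > 0 and L_ε arises from rates λ_ε(x,y) = λ0(x,y)exp((βε/2)F1(x,y)) with F1 antisymmetric. Then the first-order correction satisfies L0 h1 = β w1 where w1(x) = ∑_{y≠x} λ0(x,y) F1(x,y). -/
/-!
Differentiate the stationarity equation `∑_y (ρ_ε(y) λ_ε(y,x) - ρ_ε(x) λ_ε(x,y)) = 0`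
at `ε = 0`. By detailed balance `ρ0(y) λ0(y,x) = ρ0(x) λ0(x,y)` and antisymmetry of `F1`,
the derivative of the flux term for `y` is `ρ0(x) λ0(x,y) (h1(y) - h1(x) - β F1(x,y))`;
summing over `y` and cancelling `ρ0(x) > 0` gives `L0 h1 = β w1`.
-/

open Finset

theorem hasDerivAt_mul_exp_perturbation (c β f : ℝ) :
    HasDerivAt (fun ε : ℝ => c * Real.exp (β * ε / 2 * f)) (c * (β / 2 * f)) 0 := by
  have hlin : HasDerivAt (fun ε : ℝ => β * ε / 2 * f) (β / 2 * f) 0 := by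
    simpa [mul_div_right_comm, mul_comm, mul_left_comm] using
      (hasDerivAt_id (0 : ℝ)).mul_const (β / 2 * f)
  simpa using hlin.exp.const_mul c

theorem sum_eq_zero_of_hasDerivAt_of_sum_eq_zero {ι : Type*} {s : Finset ι}
    {g : ι → ℝ → ℝ} {g' : ι → ℝ} {t : ℝ} (hg : ∀ i ∈ s, HasDerivAt (g i) (g' i) t)
    (hsum : ∀ ε, ∑ i ∈ s, g i ε = 0) :
    ∑ i ∈ s, g' i = 0 := by
  have hconst : HasDerivAt (fun ε => ∑ i ∈ s, g i ε) 0 t := by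
    simpa only [hsum] using hasDerivAt_const t (0 : ℝ)
  exact (HasDerivAt.fun_sum hg).unique hconst

theorem first_order_stationary_correction_general
    {Ω : Type*} [Fintype Ω] [DecidableEq Ω]
    (lam0 : Ω → Ω → ℝ)
    (ρ0 : Ω → ℝ) (hρ0 : ∀ x, 0 < ρ0 x)
    (hdb : ∀ x y, ρ0 x * lam0 x y = ρ0 y * lam0 y x)
    (β : ℝ)
    (F1 : Ω → Ω → ℝ) (hF1 : ∀ x y, F1 x y = - F1 y x)
    (lam : ℝ → Ω → Ω → ℝ)
    (hlam : ∀ ε x y, lam ε x y = lam0 x y * Real.exp (β * ε / 2 * F1 x y))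
    (ρ : ℝ → Ω → ℝ) (hρinit : ρ 0 = ρ0)
    (hstat : ∀ ε x, ∑ y ∈ Finset.univ.erase x,
        (ρ ε y * lam ε y x - ρ ε x * lam ε x y) = 0)
    (h1 : Ω → ℝ)
    (hderiv : ∀ x, HasDerivAt (fun ε => ρ ε x) (ρ0 x * h1 x) 0) :
    ∀ x, ∑ y ∈ Finset.univ.erase x, lam0 x y * (h1 y - h1 x)
        = β * ∑ y ∈ Finset.univ.erase x, lam0 x y * F1 x y := by
  intro x
  have hlam_zero : ∀ a b, lam 0 a b = lam0 a b := fun a b => by simp [hlam]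
  have hlam_deriv : ∀ a b,
      HasDerivAt (fun ε => lam ε a b) (lam0 a b * (β / 2 * F1 a b)) 0 := fun a b => by
    simpa only [hlam] using hasDerivAt_mul_exp_perturbation (lam0 a b) β (F1 a b)
  have hflux_deriv : ∀ y ∈ univ.erase x,
      HasDerivAt (fun ε => ρ ε y * lam ε y x - ρ ε x * lam ε x y)
        (ρ0 x * (lam0 x y * (h1 y - h1 x) - β * (lam0 x y * F1 x y))) 0 := by
    intro y _
    refine (((hderiv y).mul (hlam_deriv y x)).sub
      ((hderiv x).mul (hlam_deriv x y))).congr_deriv ?_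
    rw [hρinit, hlam_zero, hlam_zero, hF1 y x]
    linear_combination (h1 y - β / 2 * F1 x y) * hdb y x
  have hsum := sum_eq_zero_of_hasDerivAt_of_sum_eq_zero hflux_deriv (hstat · x)
  rw [← mul_sum, mul_eq_zero, sum_sub_distrib, ← mul_sum, sub_eq_zero] at hsum
  exact hsum.resolve_left (hρ0 x).ne'

/-- If `ρ_ε` is a differentiable family of stationary densities for
the perturbed rates `λ_ε(x,y) = λ0(x,y)exp((βε/2)F1(x,y))` with
`ρ_ε = ρ0(1 + εh1 + o(ε))`, then the first-order correction satisfies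
`L0 h1 = β w1`. -/
theorem first_order_stationary_correction
    {Ω : Type*} [Fintype Ω] [DecidableEq Ω]
    (lam0 : Ω → Ω → ℝ) (hlam0 : ∀ x y, 0 ≤ lam0 x y)
    (ρ0 : Ω → ℝ) (hρ0 : ∀ x, 0 < ρ0 x)
    (hdb : ∀ x y, ρ0 x * lam0 x y = ρ0 y * lam0 y x)
    (β : ℝ) (hβ : 0 < β)
    (F1 : Ω → Ω → ℝ) (hF1 : ∀ x y, F1 x y = - F1 y x)
    (lam : ℝ → Ω → Ω → ℝ)
    (hlam : ∀ ε x y, lam ε x y = lam0 x y * Real.exp (β * ε / 2 * F1 x y))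
    (ρ : ℝ → Ω → ℝ) (hρinit : ρ 0 = ρ0)
    (hstat : ∀ ε x, ∑ y ∈ Finset.univ.erase x,
        (ρ ε y * lam ε y x - ρ ε x * lam ε x y) = 0)
    (h1 : Ω → ℝ)
    (hderiv : ∀ x, HasDerivAt (fun ε => ρ ε x) (ρ0 x * h1 x) 0) :
    ∀ x, ∑ y ∈ Finset.univ.erase x, lam0 x y * (h1 y - h1 x)
        = β * ∑ y ∈ Finset.univ.erase x, lam0 x y * F1 x y :=
  first_order_stationary_correction_general lam0 ρ0 hρ0 hdb β F1 hF1 lam hlam ρ hρinit hstat h1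
    hderiv
end

section
/- Combining the previous facts: under irreducibility and exponential relaxation of the equilibrium semigroup, the first-order stationary correction admits the McLennan representation h1(x) = −β ∫_0^∞ (e^{tL0} w1)(x) dt, i.e. the stationary density satisfies ρ_ε(x) = ρ0(x)(1 − εβ ∫_0^∞ (e^{tL0}w1)(x) dt + o(ε)). -/
/-!
Differentiating the stationarity equations at `ε = 0` and using detailed balance together with the
antisymmetry of `F1` gives the first-order balance equation `L0 h1 = β w1`.
Conjugation by `diag √ρ0` turns the reversible generator `L0` into a symmetric matrix with
nonpositive spectrum, so in an orthonormal eigenbasis `e^{tL0} L0` acts by `μ e^{tμ}`, whose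
integral over `(0, ∞)` is `-1` for `μ < 0`. The zero modes drop out because `h1` is
`ρ0`-orthogonal to the constants, which span `ker L0`. Hence
`β ∫_0^∞ e^{tL0} w1 dt = ∫_0^∞ e^{tL0} L0 h1 dt = -h1`.
-/

open NormedSpace MeasureTheory Matrix Set

lemma integrableOn_mul_exp_mul_Ioi {μ : ℝ} (hμ : μ ≤ 0) :
    IntegrableOn (fun t => μ * Real.exp (μ * t)) (Ioi 0) := by
  rcases hμ.lt_or_eq with h | rfl
  · exact (integrableOn_exp_mul_Ioi h 0).const_mul μ
  · simp

lemma integral_mul_exp_mul_Ioi {μ : ℝ} (hμ : μ < 0) :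
    ∫ t in Ioi 0, μ * Real.exp (μ * t) = -1 := by
  rw [integral_const_mul, integral_exp_mul_Ioi hμ, mul_zero, Real.exp_zero]
  have := hμ.ne
  field_simp

namespace Matrix

variable {n : Type*} [Fintype n] [DecidableEq n]

lemma map_mem_spectrum_map {K L : Type*} [Field K] [Field L] (f : K →+* L) {A : Matrix n n K}
    {μ : K} (hμ : μ ∈ spectrum K A) : f μ ∈ spectrum L (A.map f) := by
  rw [mem_spectrum_iff_isRoot_charpoly] at hμ ⊢
  rw [charpoly_map]
  exact hμ.map

namespace IsHermitian

variable {S : Matrix n n ℝ}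

lemma eq_mul_diagonal_mul_star (hS : S.IsHermitian) :
    S = (hS.eigenvectorUnitary : Matrix n n ℝ) * diagonal hS.eigenvalues *
      star (hS.eigenvectorUnitary : Matrix n n ℝ) := by
  conv_lhs => rw [hS.spectral_theorem]
  simp [Unitary.conjStarAlgAut_apply, RCLike.ofReal_real_eq_id]

lemma exp_smul_eq (hS : S.IsHermitian) (t : ℝ) :
    NormedSpace.exp (t • S) = (hS.eigenvectorUnitary : Matrix n n ℝ) *
      diagonal (fun i => Real.exp (hS.eigenvalues i * t)) *
      star (hS.eigenvectorUnitary : Matrix n n ℝ) := by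
  set U : Matrix n n ℝ := ↑hS.eigenvectorUnitary
  have hU : U⁻¹ = star U := inv_eq_right_inv (Unitary.coe_mul_star_self _)
  conv_lhs => rw [hS.eq_mul_diagonal_mul_star, ← hU, ← smul_mul_assoc, ← mul_smul_comm,
    ← diagonal_smul, exp_conj _ _ Unitary.isUnit_coe, exp_diagonal]
  rw [hU]
  congr 3
  funext i
  simp [Real.exp_eq_exp_ℝ, mul_comm]

lemma exp_smul_mulVec_mulVec_apply (hS : S.IsHermitian) (t : ℝ) (u : n → ℝ) (x : n) :
    (NormedSpace.exp (t • S) *ᵥ (S *ᵥ u)) x =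
      ∑ i, (hS.eigenvectorUnitary : Matrix n n ℝ) x i *
        (star (hS.eigenvectorUnitary : Matrix n n ℝ) *ᵥ u) i *
        (hS.eigenvalues i * Real.exp (hS.eigenvalues i * t)) := by
  set U : Matrix n n ℝ := ↑hS.eigenvectorUnitary
  have hprod : NormedSpace.exp (t • S) * S =
      U * diagonal (fun i => hS.eigenvalues i * Real.exp (hS.eigenvalues i * t)) * star U := by
    conv_lhs => arg 2; rw [hS.eq_mul_diagonal_mul_star]
    rw [hS.exp_smul_eq t]
    simp only [mul_assoc, ← mul_assoc (star U) U, U, Unitary.coe_star_mul_self, one_mul]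
    simp only [← mul_assoc, diagonal_mul_diagonal, mul_comm]
  rw [mulVec_mulVec, hprod, ← mulVec_mulVec, ← mulVec_mulVec]
  simp only [mulVec, dotProduct, diagonal_apply, ite_mul, zero_mul, Finset.sum_ite_eq,
    Finset.mem_univ, if_true]
  exact Finset.sum_congr rfl fun i _ => by ring

lemma star_eigenvectorUnitary_mulVec_eq_zero (hS : S.IsHermitian) {u : n → ℝ}
    (hu : ∀ v, S *ᵥ v = 0 → u ⬝ᵥ v = 0) {i : n} (hi : hS.eigenvalues i = 0) :
    (star (hS.eigenvectorUnitary : Matrix n n ℝ) *ᵥ u) i = 0 := by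
  rw [← hu _ (by rw [hS.mulVec_eigenvectorBasis, hi, zero_smul]), dotProduct_comm]
  simp [mulVec, dotProduct, star_apply]

theorem integral_exp_smul_mulVec_mulVec (hS : S.IsHermitian)
    (hneg : ∀ μ ∈ spectrum ℝ S, μ ≤ 0) {u : n → ℝ} (hu : ∀ v, S *ᵥ v = 0 → u ⬝ᵥ v = 0) (x : n) :
    ∫ t in Ioi (0 : ℝ), (NormedSpace.exp (t • S) *ᵥ (S *ᵥ u)) x = -u x := by
  set U : Matrix n n ℝ := ↑hS.eigenvectorUnitary
  set μ := hS.eigenvalues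
  have hμ (i : n) : μ i ≤ 0 := hneg _ (hS.eigenvalues_mem_spectrum_real i)
  have hterm (i : n) :
      ∫ t in Ioi 0, U x i * (star U *ᵥ u) i * (μ i * Real.exp (μ i * t)) =
        -(U x i * (star U *ᵥ u) i) := by
    rw [integral_const_mul]
    rcases (hμ i).lt_or_eq with hi | hi
    · rw [integral_mul_exp_mul_Ioi hi, mul_neg_one]
    · rw [hS.star_eigenvectorUnitary_mulVec_eq_zero hu hi]
      simp
  simp_rw [hS.exp_smul_mulVec_mulVec_apply]
  rw [integral_finsetSum _ fun i _ => (integrableOn_mul_exp_mul_Ioi (hμ i)).const_mul _,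
    Finset.sum_congr rfl fun i _ => hterm i, Finset.sum_neg_distrib]
  have hUU : U *ᵥ (star U *ᵥ u) = u := by simp [U, mulVec_mulVec]
  conv_rhs => rw [← hUU]
  rfl

end IsHermitian

section Reversible

variable {π : n → ℝ}

noncomputable def sqrtDiagonal (hπ : ∀ x, 0 < π x) : (Matrix n n ℝ)ˣ where
  val := diagonal fun x => √(π x)
  inv := diagonal fun x => (√(π x))⁻¹
  val_inv := by
    simp [diagonal_mul_diagonal, mul_inv_cancel₀ (Real.sqrt_pos.2 (hπ _)).ne']
  inv_val := by
    simp [diagonal_mul_diagonal, inv_mul_cancel₀ (Real.sqrt_pos.2 (hπ _)).ne']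

noncomputable def symmetrize (hπ : ∀ x, 0 < π x) (A : Matrix n n ℝ) : Matrix n n ℝ :=
  (sqrtDiagonal hπ : Matrix n n ℝ) * A * (↑(sqrtDiagonal hπ)⁻¹ : Matrix n n ℝ)

lemma symmetrize_apply (hπ : ∀ x, 0 < π x) (A : Matrix n n ℝ) (x y : n) :
    symmetrize hπ A x y = √(π x) * A x y * (√(π y))⁻¹ := by
  simp [symmetrize, sqrtDiagonal, diagonal_mul, mul_diagonal]

lemma isHermitian_symmetrize (hπ : ∀ x, 0 < π x) {A : Matrix n n ℝ}
    (hrev : ∀ x y, π x * A x y = π y * A y x) :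
    (symmetrize hπ A).IsHermitian := by
  ext x y
  simp only [conjTranspose_apply, star_trivial, symmetrize_apply]
  have hx := Real.sqrt_pos.2 (hπ x)
  have hy := Real.sqrt_pos.2 (hπ y)
  field_simp
  have h := hrev y x
  rw [← Real.sq_sqrt (hπ x).le, ← Real.sq_sqrt (hπ y).le] at h
  linear_combination h

lemma spectrum_symmetrize (hπ : ∀ x, 0 < π x) (A : Matrix n n ℝ) :
    spectrum ℝ (symmetrize hπ A) = spectrum ℝ A :=
  spectrum.units_conjugate

theorem integral_exp_smul_mulVec_mulVec_of_reversible (hπ : ∀ x, 0 < π x) {A : Matrix n n ℝ}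
    (hrev : ∀ x y, π x * A x y = π y * A y x) (hneg : ∀ μ ∈ spectrum ℝ A, μ ≤ 0) {u : n → ℝ}
    (hu : ∀ v, A *ᵥ v = 0 → ∑ x, π x * u x * v x = 0) (x : n) :
    ∫ t in Ioi (0 : ℝ), (NormedSpace.exp (t • A) *ᵥ (A *ᵥ u)) x = -u x := by
  set D := sqrtDiagonal hπ
  set S := symmetrize hπ A
  have hSD : S = D * A * (↑D⁻¹ : Matrix n n ℝ) := rfl
  have hD_apply (w : n → ℝ) (y : n) : ((D : Matrix n n ℝ) *ᵥ w) y = √(π y) * w y :=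
    mulVec_diagonal _ _ _
  have hDinv_apply (w : n → ℝ) (y : n) : ((↑D⁻¹ : Matrix n n ℝ) *ᵥ w) y = (√(π y))⁻¹ * w y :=
    mulVec_diagonal _ _ _
  have hconj (t : ℝ) : NormedSpace.exp (t • S) *ᵥ (S *ᵥ (↑D *ᵥ u)) =
      ↑D *ᵥ (NormedSpace.exp (t • A) *ᵥ (A *ᵥ u)) := by
    rw [hSD, ← smul_mul_assoc, ← mul_smul_comm, exp_units_conj]
    simp only [mulVec_mulVec, mul_assoc, Units.inv_mul_cancel_left, Units.inv_mul, mul_one]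
  have hker (v : n → ℝ) (hv : S *ᵥ v = 0) : (↑D *ᵥ u) ⬝ᵥ v = 0 := by
    have hAv : A *ᵥ (↑D⁻¹ *ᵥ v) = 0 := by
      rw [← mulVec_zero (↑D⁻¹ : Matrix n n ℝ), ← hv, hSD]
      simp only [mulVec_mulVec, ← mul_assoc, Units.inv_mul, one_mul]
    rw [← hu _ hAv]
    refine Finset.sum_congr rfl fun y _ => ?_
    rw [hD_apply, hDinv_apply]
    field_simp [(Real.sqrt_pos.2 (hπ y)).ne']
    rw [Real.sq_sqrt (hπ y).le]
    ring
  have hsqrt : √(π x) ≠ 0 := (Real.sqrt_pos.2 (hπ x)).ne'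
  calc ∫ t in Ioi (0 : ℝ), (NormedSpace.exp (t • A) *ᵥ (A *ᵥ u)) x
      = (√(π x))⁻¹ * ∫ t in Ioi (0 : ℝ), (NormedSpace.exp (t • S) *ᵥ (S *ᵥ (↑D *ᵥ u))) x := by
        rw [← integral_const_mul]
        congr with t
        rw [hconj, hD_apply, inv_mul_cancel_left₀ hsqrt]
    _ = -u x := by
        rw [(isHermitian_symmetrize hπ hrev).integral_exp_smul_mulVec_mulVec
          (spectrum_symmetrize hπ A ▸ hneg) hker, hD_apply]
        field_simp

end Reversible

end Matrix

section Generator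

variable {Ω : Type*} [Fintype Ω] [DecidableEq Ω] {lam0 : Ω → Ω → ℝ} {L0 : Matrix Ω Ω ℝ}

lemma generator_mulVec_apply
    (hL0 : ∀ x y, L0 x y =
      if x = y then - ∑ z ∈ Finset.univ.erase x, lam0 x z else lam0 x y)
    (g : Ω → ℝ) (x : Ω) :
    (L0 *ᵥ g) x = ∑ y ∈ Finset.univ.erase x, lam0 x y * (g y - g x) := by
  have hoff : ∀ y ∈ Finset.univ.erase x, L0 x y * g y = lam0 x y * g y := fun y hy => by
    rw [hL0, if_neg (Finset.ne_of_mem_erase hy).symm]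
  rw [mulVec, dotProduct, ← Finset.add_sum_erase _ _ (Finset.mem_univ x),
    Finset.sum_congr rfl hoff, hL0, if_pos rfl]
  simp only [mul_sub, Finset.sum_sub_distrib, ← Finset.sum_mul, neg_mul]
  ring

lemma generator_reversible
    (hL0 : ∀ x y, L0 x y =
      if x = y then - ∑ z ∈ Finset.univ.erase x, lam0 x z else lam0 x y)
    {ρ0 : Ω → ℝ} (hdb : ∀ x y, ρ0 x * lam0 x y = ρ0 y * lam0 y x) (x y : Ω) :
    ρ0 x * L0 x y = ρ0 y * L0 y x := by
  rcases eq_or_ne x y with rfl | h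
  · rfl
  · rw [hL0, hL0, if_neg h, if_neg h.symm, hdb]

end Generator

lemma hasDerivAt_tilted_rate (a β F : ℝ) :
    HasDerivAt (fun ε : ℝ => a * Real.exp (β * ε / 2 * F)) (a * (β / 2 * F)) 0 := by
  simpa using ((((hasDerivAt_id (0 : ℝ)).const_mul β).div_const 2).mul_const F).exp.const_mul a

section FirstOrder

variable {Ω : Type*} [Fintype Ω] [DecidableEq Ω] {lam0 : Ω → Ω → ℝ} {ρ0 : Ω → ℝ} {β : ℝ}
  {F1 : Ω → Ω → ℝ} {lam : ℝ → Ω → Ω → ℝ} {ρ : ℝ → Ω → ℝ} {h1 w1 : Ω → ℝ} {L0 : Matrix Ω Ω ℝ}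

lemma stationarity_derivative_eq_zero
    (hlam : ∀ ε x y, lam ε x y = lam0 x y * Real.exp (β * ε / 2 * F1 x y))
    (hρinit : ρ 0 = ρ0)
    (hstat : ∀ ε x, ∑ y ∈ Finset.univ.erase x,
        (ρ ε y * lam ε y x - ρ ε x * lam ε x y) = 0)
    (hderiv : ∀ x, HasDerivAt (fun ε => ρ ε x) (ρ0 x * h1 x) 0) (x : Ω) :
    ∑ y ∈ Finset.univ.erase x,
      (ρ0 y * h1 y * lam0 y x + ρ0 y * (lam0 y x * (β / 2 * F1 y x)) -
        (ρ0 x * h1 x * lam0 x y + ρ0 x * (lam0 x y * (β / 2 * F1 x y)))) = 0 := by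
  have hrate (y z : Ω) :
      HasDerivAt (fun ε => lam ε y z) (lam0 y z * (β / 2 * F1 y z)) 0 := by
    simp only [hlam]
    exact hasDerivAt_tilted_rate _ _ _
  have hsum := HasDerivAt.fun_sum (u := Finset.univ.erase x) fun y _ =>
    ((hderiv y).fun_mul (hrate y x)).fun_sub ((hderiv x).fun_mul (hrate x y))
  have hrate0 (y z : Ω) : lam 0 y z = lam0 y z := by simp [hlam]
  simp only [hstat, hrate0, hρinit] at hsum
  exact hsum.unique (hasDerivAt_const 0 0)

theorem generator_mulVec_first_order_correction
    (hρ0 : ∀ x, 0 < ρ0 x) (hdb : ∀ x y, ρ0 x * lam0 x y = ρ0 y * lam0 y x)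
    (hF1 : ∀ x y, F1 x y = - F1 y x)
    (hlam : ∀ ε x y, lam ε x y = lam0 x y * Real.exp (β * ε / 2 * F1 x y))
    (hL0 : ∀ x y, L0 x y =
      if x = y then - ∑ z ∈ Finset.univ.erase x, lam0 x z else lam0 x y)
    (hw1 : ∀ x, w1 x = ∑ y ∈ Finset.univ.erase x, lam0 x y * F1 x y)
    (hρinit : ρ 0 = ρ0)
    (hstat : ∀ ε x, ∑ y ∈ Finset.univ.erase x,
        (ρ ε y * lam ε y x - ρ ε x * lam ε x y) = 0)
    (hderiv : ∀ x, HasDerivAt (fun ε => ρ ε x) (ρ0 x * h1 x) 0) :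
    L0 *ᵥ h1 = β • w1 := by
  ext x
  have h := stationarity_derivative_eq_zero hlam hρinit hstat hderiv x
  have hsummand : ∀ y ∈ Finset.univ.erase x,
      ρ0 y * h1 y * lam0 y x + ρ0 y * (lam0 y x * (β / 2 * F1 y x)) -
        (ρ0 x * h1 x * lam0 x y + ρ0 x * (lam0 x y * (β / 2 * F1 x y))) =
      ρ0 x * (lam0 x y * (h1 y - h1 x) - β * (lam0 x y * F1 x y)) := fun y _ => by
    linear_combination (h1 y + β / 2 * F1 y x) * hdb y x + β / 2 * ρ0 x * lam0 x y * hF1 y x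
  rw [Finset.sum_congr rfl hsummand, ← Finset.mul_sum, Finset.sum_sub_distrib,
    ← Finset.mul_sum, ← hw1, ← generator_mulVec_apply hL0] at h
  rw [Pi.smul_apply, smul_eq_mul, ← sub_eq_zero]
  exact (mul_eq_zero.1 h).resolve_left (hρ0 x).ne'

end FirstOrder

theorem mclennan_first_order_representation_general
    {Ω : Type*} [Fintype Ω] [DecidableEq Ω]
    (lam0 : Ω → Ω → ℝ)
    (ρ0 : Ω → ℝ) (hρ0 : ∀ x, 0 < ρ0 x)
    (hdb : ∀ x y, ρ0 x * lam0 x y = ρ0 y * lam0 y x)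
    (β : ℝ)
    (F1 : Ω → Ω → ℝ) (hF1 : ∀ x y, F1 x y = - F1 y x)
    (lam : ℝ → Ω → Ω → ℝ)
    (hlam : ∀ ε x y, lam ε x y = lam0 x y * Real.exp (β * ε / 2 * F1 x y))
    -- the generator as a matrix: off-diagonal entries `λ0(x,y)`, diagonal `−ξ0(x)`
    (L0 : Matrix Ω Ω ℝ)
    (hL0 : ∀ x y, L0 x y =
      if x = y then - ∑ z ∈ Finset.univ.erase x, lam0 x z else lam0 x y)
    -- irreducibility: the kernel of `L0` consists of the constants
    (hker : ∀ g : Ω → ℝ, Matrix.mulVec L0 g = 0 → ∃ c : ℝ, g = fun _ => c)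
    -- exponential relaxation: all nonzero eigenvalues have negative real part
    (hspec : ∀ μ ∈ spectrum ℂ (L0.map (Complex.ofReal)), μ = 0 ∨ μ.re < 0)
    (w1 : Ω → ℝ)
    (hw1 : ∀ x, w1 x = ∑ y ∈ Finset.univ.erase x, lam0 x y * F1 x y)
    -- the smooth family of stationary densities, `ρ_ε = ρ0(1 + ε h1 + o(ε))`
    (ρ : ℝ → Ω → ℝ) (hρinit : ρ 0 = ρ0)
    (hstat : ∀ ε x, ∑ y ∈ Finset.univ.erase x,
        (ρ ε y * lam ε y x - ρ ε x * lam ε x y) = 0)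
    (h1 : Ω → ℝ) (hmean : ∑ x, ρ0 x * h1 x = 0)
    (hderiv : ∀ x, HasDerivAt (fun ε => ρ ε x) (ρ0 x * h1 x) 0) :
    ∀ x : Ω, h1 x =
      - β * ∫ t in Set.Ioi (0 : ℝ), (Matrix.mulVec (exp (t • L0)) w1) x := by
  intro x
  have hgen : L0 *ᵥ h1 = β • w1 := generator_mulVec_first_order_correction hρ0 hdb hF1 hlam hL0
    hw1 hρinit hstat hderiv
  have hneg : ∀ μ ∈ spectrum ℝ L0, μ ≤ 0 := fun μ hμ => by
    rcases hspec _ (map_mem_spectrum_map Complex.ofRealHom hμ) with h | h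
    · exact (Complex.ofReal_eq_zero.1 h).le
    · exact (Complex.ofReal_re μ ▸ h).le
  have horth : ∀ v, L0 *ᵥ v = 0 → ∑ y, ρ0 y * h1 y * v y = 0 := fun v hv => by
    obtain ⟨c, rfl⟩ := hker v hv
    rw [← Finset.sum_mul, hmean, zero_mul]
  have h := integral_exp_smul_mulVec_mulVec_of_reversible hρ0 (generator_reversible hL0 hdb)
    hneg horth x
  simp only [hgen, mulVec_smul, Pi.smul_apply, smul_eq_mul, integral_const_mul] at h
  linarith

/-- McLennan representation of the first-order stationary
correction: under irreducibility and exponential relaxation of the equilibrium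
semigroup, `h1(x) = −β ∫_0^∞ (e^{tL0} w1)(x) dt`. -/
theorem mclennan_first_order_representation
    {Ω : Type*} [Fintype Ω] [DecidableEq Ω] [Nonempty Ω]
    (lam0 : Ω → Ω → ℝ) (hlam0 : ∀ x y, 0 ≤ lam0 x y)
    (ρ0 : Ω → ℝ) (hρ0 : ∀ x, 0 < ρ0 x) (hnorm : ∑ x, ρ0 x = 1)
    (hdb : ∀ x y, ρ0 x * lam0 x y = ρ0 y * lam0 y x)
    (β : ℝ) (hβ : 0 < β)
    (F1 : Ω → Ω → ℝ) (hF1 : ∀ x y, F1 x y = - F1 y x)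
    (lam : ℝ → Ω → Ω → ℝ)
    (hlam : ∀ ε x y, lam ε x y = lam0 x y * Real.exp (β * ε / 2 * F1 x y))
    -- the generator as a matrix: off-diagonal entries `λ0(x,y)`, diagonal `−ξ0(x)`
    (L0 : Matrix Ω Ω ℝ)
    (hL0 : ∀ x y, L0 x y =
      if x = y then - ∑ z ∈ Finset.univ.erase x, lam0 x z else lam0 x y)
    -- irreducibility: the kernel of `L0` consists of the constants
    (hker : ∀ g : Ω → ℝ, Matrix.mulVec L0 g = 0 → ∃ c : ℝ, g = fun _ => c)
    -- exponential relaxation: all nonzero eigenvalues have negative real part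
    (hspec : ∀ μ ∈ spectrum ℂ (L0.map (Complex.ofReal)), μ = 0 ∨ μ.re < 0)
    (w1 : Ω → ℝ)
    (hw1 : ∀ x, w1 x = ∑ y ∈ Finset.univ.erase x, lam0 x y * F1 x y)
    -- the smooth family of stationary densities, `ρ_ε = ρ0(1 + ε h1 + o(ε))`
    (ρ : ℝ → Ω → ℝ) (hρinit : ρ 0 = ρ0)
    (hstat : ∀ ε x, ∑ y ∈ Finset.univ.erase x,
        (ρ ε y * lam ε y x - ρ ε x * lam ε x y) = 0)
    (h1 : Ω → ℝ) (hmean : ∑ x, ρ0 x * h1 x = 0)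
    (hderiv : ∀ x, HasDerivAt (fun ε => ρ ε x) (ρ0 x * h1 x) 0) :
    ∀ x : Ω, h1 x =
      - β * ∫ t in Set.Ioi (0 : ℝ), (Matrix.mulVec (exp (t • L0)) w1) x :=
  mclennan_first_order_representation_general lam0 ρ0 hρ0 hdb β F1 hF1 lam hlam L0 hL0 hker hspec w1
    hw1 ρ hρinit hstat h1 hmean hderiv
end

section
/- Transient fluctuation symmetry (discrete-time version): Let P be a stochastic matrix on a finite state space, ρ0 > 0 a probability density, and define for a path ω = (x_0,…,x_n) with all P-transition probabilities positive, S(ω) = log[ρ0(x_0)∏_k P(x_k,x_{k+1})] − log[ρ0(x_n)∏_k P(x_{k+1},x_k)]. Then for every function f on paths, E_{ρ0}[f] = E_{ρ0}[ (f∘θ) · e^{−S} ], where E_{ρ0} is expectation over the chain with transition matrix P started from ρ0, and θ is path reversal. -/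
/-! Reversing a path is an involution of path space, so `∑ σ, w σ * f σ = ∑ σ, w (θ σ) * f (θ σ)`.
Since all weights are positive, `e^{-S σ}` is exactly the ratio `w (θ σ) / w σ` of the weight of the
reversed path to that of the path, which turns the right-hand side of the theorem into this reindexed sum. -/

open Finset

namespace MarkovPath

variable {Ω : Type*} {n : ℕ}

def weight (ρ : Ω → ℝ) (P : Ω → Ω → ℝ) (σ : Fin (n + 1) → Ω) : ℝ :=
  ρ (σ 0) * ∏ k : Fin n, P (σ k.castSucc) (σ k.succ)

def reverse : Equiv.Perm (Fin (n + 1) → Ω) :=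
  Function.Involutive.toPerm (fun σ => σ ∘ Fin.rev) fun σ => by
    funext i; simp

@[simp]
theorem reverse_apply (σ : Fin (n + 1) → Ω) : reverse σ = σ ∘ Fin.rev := rfl

theorem weight_reverse (ρ : Ω → ℝ) (P : Ω → Ω → ℝ) (σ : Fin (n + 1) → Ω) :
    weight ρ P (reverse σ) = ρ (σ (Fin.last n)) * ∏ k : Fin n, P (σ k.succ) (σ k.castSucc) := by
  unfold weight
  rw [reverse_apply, Function.comp_apply, Fin.rev_zero]
  congr 1
  exact Fintype.prod_equiv Fin.revPerm _ _ fun k => by simp [Fin.rev_castSucc, Fin.rev_succ]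

theorem weight_pos {ρ : Ω → ℝ} {P : Ω → Ω → ℝ} (hρ : ∀ x, 0 < ρ x) (hP : ∀ x y, 0 < P x y)
    (σ : Fin (n + 1) → Ω) : 0 < weight ρ P σ :=
  mul_pos (hρ _) (prod_pos fun _ _ => hP _ _)

end MarkovPath

theorem Real.mul_exp_neg_log_sub_log {a b : ℝ} (ha : 0 < a) (hb : 0 < b) :
    a * Real.exp (-(Real.log a - Real.log b)) = b := by
  rw [neg_sub, Real.exp_sub, Real.exp_log ha, Real.exp_log hb]
  field_simp

open MarkovPath in
theorem transient_fluctuation_symmetry_general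
    {Ω : Type*} [Fintype Ω]
    (n : ℕ)
    (P : Ω → Ω → ℝ) (hP : ∀ x y, 0 < P x y)
    (ρ0 : Ω → ℝ) (hρ0 : ∀ x, 0 < ρ0 x)
    (θ : (Fin (n + 1) → Ω) → (Fin (n + 1) → Ω))
    (hθ : ∀ σ i, θ σ i = σ i.rev)
    (S : (Fin (n + 1) → Ω) → ℝ)
    (hS : ∀ σ : Fin (n + 1) → Ω, S σ =
      Real.log (ρ0 (σ 0) * ∏ k : Fin n, P (σ k.castSucc) (σ k.succ))
      - Real.log (ρ0 (σ (Fin.last n)) * ∏ k : Fin n, P (σ k.succ) (σ k.castSucc)))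
    (f : (Fin (n + 1) → Ω) → ℝ) :
    ∑ σ : Fin (n + 1) → Ω,
        (ρ0 (σ 0) * ∏ k : Fin n, P (σ k.castSucc) (σ k.succ)) * f σ
      = ∑ σ : Fin (n + 1) → Ω,
        (ρ0 (σ 0) * ∏ k : Fin n, P (σ k.castSucc) (σ k.succ))
          * f (θ σ) * Real.exp (- S σ) := by
  have hθ_eq : θ = reverse := funext fun σ => funext (hθ σ)
  have hS_eq : ∀ σ, S σ = Real.log (weight ρ0 P σ) - Real.log (weight ρ0 P (reverse σ)) := by
    intro σ; rw [hS, weight_reverse, weight]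
  have h_term : ∀ σ, weight ρ0 P σ * f (θ σ) * Real.exp (-S σ)
      = weight ρ0 P (reverse σ) * f (reverse σ) := by
    intro σ
    rw [hθ_eq, hS_eq, mul_right_comm,
      Real.mul_exp_neg_log_sub_log (weight_pos hρ0 hP σ) (weight_pos hρ0 hP _)]
  change ∑ σ, weight ρ0 P σ * f σ = ∑ σ, weight ρ0 P σ * f (θ σ) * Real.exp (-S σ)
  simp only [h_term]
  exact (Equiv.sum_comp reverse fun σ => weight ρ0 P σ * f σ).symm

/-- Transient fluctuation symmetry (discrete time):
`E_{ρ0}[f] = E_{ρ0}[(f∘θ) e^{−S}]`. -/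
theorem transient_fluctuation_symmetry
    {Ω : Type*} [Fintype Ω] [DecidableEq Ω]
    (n : ℕ)
    (P : Ω → Ω → ℝ) (hP : ∀ x y, 0 < P x y) (hstoch : ∀ x, ∑ y, P x y = 1)
    (ρ0 : Ω → ℝ) (hρ0 : ∀ x, 0 < ρ0 x) (hnorm : ∑ x, ρ0 x = 1)
    (θ : (Fin (n + 1) → Ω) → (Fin (n + 1) → Ω))
    (hθ : ∀ σ i, θ σ i = σ i.rev)
    (S : (Fin (n + 1) → Ω) → ℝ)
    (hS : ∀ σ : Fin (n + 1) → Ω, S σ =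
      Real.log (ρ0 (σ 0) * ∏ k : Fin n, P (σ k.castSucc) (σ k.succ))
      - Real.log (ρ0 (σ (Fin.last n)) * ∏ k : Fin n, P (σ k.succ) (σ k.castSucc)))
    (f : (Fin (n + 1) → Ω) → ℝ) :
    ∑ σ : Fin (n + 1) → Ω,
        (ρ0 (σ 0) * ∏ k : Fin n, P (σ k.castSucc) (σ k.succ)) * f σ
      = ∑ σ : Fin (n + 1) → Ω,
        (ρ0 (σ 0) * ∏ k : Fin n, P (σ k.castSucc) (σ k.succ))
          * f (θ σ) * Real.exp (- S σ) :=
  transient_fluctuation_symmetry_general n P hP ρ0 hρ0 θ hθ S hS f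
end

section
/- Generalized McLennan formula in terms of entropy flux and traffic: for strictly positive stochastic matrices P and P0 on a finite state space, with P0 reversible with respect to ρ0 > 0, the time-n distribution of the P-chain started from ρ0 satisfies ρ_n(x) = ρ0(x) · E^0_x[exp(−(S + T)/2)], where E^0_x is expectation over the P0-chain (equilibrium reference) started from x, S = A∘θ − A, T = A∘θ + A, and A(ω) = −∑_k log(P(x_k,x_{k+1})/P0(x_k,x_{k+1})). -/
/-!
Reindex the sum over paths by the time reversal `θ`. Since `(S + T) / 2 = A ∘ θ`, the factor
`exp (-(S + T) / 2)` is the likelihood ratio `∏ P / P0` along the reversed path, and detailed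
balance `ρ0 (ω 0) ∏ P0 (ω) = ρ0 (ω n) ∏ P0 (θ ω)` moves the reference weight onto the reversed
path as well; their product is the `P`-weight of `θ ω` started from `ρ0`.
-/

open Finset

def pathWeight {Ω M : Type*} [CommMonoid M] (Q : Ω → Ω → M) {n : ℕ} (σ : Fin (n + 1) → Ω) : M :=
  ∏ k : Fin n, Q (σ k.castSucc) (σ k.succ)

section
variable {Ω M : Type*} [CommMonoid M]

theorem pathWeight_mul (Q R : Ω → Ω → M) {n : ℕ} (σ : Fin (n + 1) → Ω) :
    pathWeight (Q * R) σ = pathWeight Q σ * pathWeight R σ :=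
  prod_mul_distrib

theorem pathWeight_comp_rev (Q : Ω → Ω → M) {n : ℕ} (σ : Fin (n + 1) → Ω) :
    pathWeight Q (σ ∘ Fin.rev) = pathWeight (flip Q) σ := by
  refine Fintype.prod_equiv Fin.revPerm _ _ fun k => ?_
  simp [flip, Fin.rev_castSucc, Fin.rev_succ]

theorem pathWeight_succ (Q : Ω → Ω → M) {n : ℕ} (σ : Fin (n + 2) → Ω) :
    pathWeight Q σ = Q (σ 0) (σ 1) * pathWeight Q (σ ∘ Fin.succ) :=
  Fin.prod_univ_succ _

theorem mul_pathWeight_eq_of_detailed_balance {ρ : Ω → M} {Q : Ω → Ω → M}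
    (hρQ : ∀ x y, ρ x * Q x y = ρ y * Q y x) {n : ℕ} (σ : Fin (n + 1) → Ω) :
    ρ (σ 0) * pathWeight Q σ = ρ (σ (Fin.last n)) * pathWeight Q (σ ∘ Fin.rev) := by
  rw [pathWeight_comp_rev]
  induction n with
  | zero => simp [pathWeight]
  | succ n ih =>
    have htail := ih (σ ∘ Fin.succ)
    simp only [Function.comp_apply, Fin.succ_zero_eq_one, Fin.succ_last] at htail
    calc ρ (σ 0) * pathWeight Q σ
        = Q (σ 1) (σ 0) * (ρ (σ 1) * pathWeight Q (σ ∘ Fin.succ)) := by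
          rw [pathWeight_succ, ← mul_assoc, hρQ, mul_comm (ρ _), mul_assoc]
      _ = ρ (σ (Fin.last (n + 1))) * pathWeight (flip Q) σ := by
          rw [htail, pathWeight_succ (flip Q), mul_left_comm]; rfl
end

theorem exp_sum_log_div_eq_pathWeight {Ω : Type*} {P P0 : Ω → Ω → ℝ}
    (hP : ∀ x y, 0 < P x y) (hP0 : ∀ x y, 0 < P0 x y) {n : ℕ} (σ : Fin (n + 1) → Ω) :
    Real.exp (∑ k : Fin n, Real.log (P (σ k.castSucc) (σ k.succ) / P0 (σ k.castSucc) (σ k.succ)))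
      = pathWeight (P / P0) σ := by
  rw [Real.exp_sum]
  exact prod_congr rfl fun k _ => Real.exp_log (div_pos (hP _ _) (hP0 _ _))

theorem generalized_mclennan_formula_general
    {Ω : Type*} [Fintype Ω] [DecidableEq Ω]
    (n : ℕ)
    (P P0 : Ω → Ω → ℝ)
    (hP : ∀ x y, 0 < P x y) (hP0 : ∀ x y, 0 < P0 x y)
    (ρ0 : Ω → ℝ)
    (hrev : ∀ x y, ρ0 x * P0 x y = ρ0 y * P0 y x)
    (θ : (Fin (n + 1) → Ω) → (Fin (n + 1) → Ω))
    (hθ : ∀ σ i, θ σ i = σ i.rev)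
    (A S T : (Fin (n + 1) → Ω) → ℝ)
    (hA : ∀ σ : Fin (n + 1) → Ω, A σ =
      - ∑ k : Fin n, Real.log (P (σ k.castSucc) (σ k.succ) / P0 (σ k.castSucc) (σ k.succ)))
    (hS : ∀ σ, S σ = A (θ σ) - A σ) (hT : ∀ σ, T σ = A (θ σ) + A σ)
    (x : Ω) :
    (∑ σ : Fin (n + 1) → Ω, if σ (Fin.last n) = x then
        ρ0 (σ 0) * ∏ k : Fin n, P (σ k.castSucc) (σ k.succ) else 0)
      = ρ0 x * ∑ σ : Fin (n + 1) → Ω, if σ 0 = x then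
          (∏ k : Fin n, P0 (σ k.castSucc) (σ k.succ))
            * Real.exp (- (S σ + T σ) / 2) else 0 := by
  obtain rfl : θ = (· ∘ Fin.rev) := funext fun σ => funext (hθ σ)
  have hexp (σ : Fin (n + 1) → Ω) :
      Real.exp (-(S σ + T σ) / 2) = pathWeight (P / P0) (σ ∘ Fin.rev) := by
    have hST : -(S σ + T σ) / 2 = -A (σ ∘ Fin.rev) := by rw [hS, hT]; ring
    rw [hST, hA, neg_neg, exp_sum_log_div_eq_pathWeight hP hP0]
  have hP0P : P0 * (P / P0) = P := funext₂ fun a b => mul_div_cancel₀ _ (hP0 a b).ne'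
  have hθinv : Function.Involutive (· ∘ Fin.rev : (Fin (n + 1) → Ω) → _) := fun σ => by
    ext; simp
  rw [mul_sum, ← Equiv.sum_comp hθinv.toPerm]
  refine sum_congr rfl fun σ _ => ?_
  by_cases hσ : σ 0 = x
  · subst hσ
    simp only [Function.Involutive.coe_toPerm, Function.comp_apply, Fin.rev_last, Fin.rev_zero,
      if_true, hexp]
    calc ρ0 (σ (Fin.last n)) * pathWeight P (σ ∘ Fin.rev)
        = ρ0 (σ (Fin.last n)) * pathWeight P0 (σ ∘ Fin.rev)
            * pathWeight (P / P0) (σ ∘ Fin.rev) := by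
          rw [mul_assoc, ← pathWeight_mul, hP0P]
      _ = ρ0 (σ 0) * (pathWeight P0 σ * pathWeight (P / P0) (σ ∘ Fin.rev)) := by
          rw [← mul_pathWeight_eq_of_detailed_balance hrev, mul_assoc]
  · simp [hσ]

/-- Generalized McLennan formula:
`ρ_n(x) = ρ0(x) E^0_x[exp(−(S+T)/2)]`, with the expectation under the
equilibrium reference chain `P0` started from `x`. -/
theorem generalized_mclennan_formula
    {Ω : Type*} [Fintype Ω] [DecidableEq Ω]
    (n : ℕ)
    (P P0 : Ω → Ω → ℝ)
    (hP : ∀ x y, 0 < P x y) (hP0 : ∀ x y, 0 < P0 x y)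
    (hstoch : ∀ x, ∑ y, P x y = 1) (hstoch0 : ∀ x, ∑ y, P0 x y = 1)
    (ρ0 : Ω → ℝ) (hρ0 : ∀ x, 0 < ρ0 x)
    (hrev : ∀ x y, ρ0 x * P0 x y = ρ0 y * P0 y x)
    (θ : (Fin (n + 1) → Ω) → (Fin (n + 1) → Ω))
    (hθ : ∀ σ i, θ σ i = σ i.rev)
    (A S T : (Fin (n + 1) → Ω) → ℝ)
    (hA : ∀ σ : Fin (n + 1) → Ω, A σ =
      - ∑ k : Fin n, Real.log (P (σ k.castSucc) (σ k.succ) / P0 (σ k.castSucc) (σ k.succ)))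
    (hS : ∀ σ, S σ = A (θ σ) - A σ) (hT : ∀ σ, T σ = A (θ σ) + A σ)
    (x : Ω) :
    (∑ σ : Fin (n + 1) → Ω, if σ (Fin.last n) = x then
        ρ0 (σ 0) * ∏ k : Fin n, P (σ k.castSucc) (σ k.succ) else 0)
      = ρ0 x * ∑ σ : Fin (n + 1) → Ω, if σ 0 = x then
          (∏ k : Fin n, P0 (σ k.castSucc) (σ k.succ))
            * Real.exp (- (S σ + T σ) / 2) else 0 :=
  generalized_mclennan_formula_general n P P0 hP hP0 ρ0 hrev θ hθ A S T hA hS hT x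
end

section
/- Onsager reciprocity (finite-state version): with L0 self-adjoint in the ρ0-inner product and invertible on the zero-mean subspace, define for antisymmetric forcings F, G the functions w^F(x) = ∑_{y≠x}λ0(x,y)F(x,y), h^F = L0^{-1}w^F, and linear response currents j^F(x,y) = γ(x,y)(F(x,y) + h^F(x) − h^F(y)) with γ(x,y) = ρ0(x)λ0(x,y). Then (1/2)∑_{x,y} G(x,y) j^F(x,y) = (1/2)∑_{x,y} F(x,y) j^G(x,y). -/
/-!
Write `γ(x,y) = ρ0(x) λ0(x,y)`, symmetric by detailed balance. Pairing the antisymmetric `G` with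
`h(x) - h(y)` against `γ` gives `2 ∑ ρ0 h w^G`, so `∑ G j^F = ∑ γ G F + 2 ⟨h^F, w^G⟩_ρ0`.
Since `w^G = L0 h^G` and `L0` is self-adjoint for `⟨·,·⟩_ρ0`, the last term is symmetric in `F`, `G`.
-/

namespace Onsager

open Finset

variable {Ω : Type*} [Fintype Ω]

/-- `L0 f` -/
def generator (lam0 : Ω → Ω → ℝ) (f : Ω → ℝ) (x : Ω) : ℝ :=
  ∑ y, lam0 x y * (f y - f x)

/-- `w^F` -/
def forceDrift (lam0 : Ω → Ω → ℝ) (F : Ω → Ω → ℝ) (x : Ω) : ℝ :=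
  ∑ y, lam0 x y * F x y

lemma generator_eq_forceDrift (lam0 : Ω → Ω → ℝ) (f : Ω → ℝ) :
    generator lam0 f = forceDrift lam0 (fun x y => f y - f x) :=
  rfl

lemma forceDrift_eq_generator_of_sum_erase [DecidableEq Ω] {lam0 F : Ω → Ω → ℝ} {h : Ω → ℝ}
    (hF : ∀ x y, F x y = - F y x)
    (hh : ∀ x, ∑ y ∈ univ.erase x, lam0 x y * (h y - h x) = ∑ y ∈ univ.erase x, lam0 x y * F x y) :
    forceDrift lam0 F = generator lam0 h := by
  funext x
  have hFxx : F x x = 0 := by linarith [hF x x]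
  rw [forceDrift, generator, ← sum_erase univ (a := x) (by rw [hFxx, mul_zero]),
    ← sum_erase univ (a := x) (by rw [sub_self, mul_zero]), hh x]

variable {lam0 : Ω → Ω → ℝ} {ρ0 : Ω → ℝ}

lemma sum_mul_antisymm_mul_sub (hdb : ∀ x y, ρ0 x * lam0 x y = ρ0 y * lam0 y x)
    {Q : Ω → Ω → ℝ} (hQ : ∀ x y, Q x y = - Q y x) (h : Ω → ℝ) :
    ∑ x, ∑ y, ρ0 x * lam0 x y * Q x y * (h x - h y)
      = 2 * ∑ x, ρ0 x * h x * forceDrift lam0 Q x := by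
  have hswap : ∑ x, ∑ y, ρ0 x * lam0 x y * Q x y * h y
      = - ∑ x, ∑ y, ρ0 x * lam0 x y * Q x y * h x := by
    rw [sum_comm, ← sum_neg_distrib]
    refine sum_congr rfl fun x _ => ?_
    rw [← sum_neg_distrib]
    refine sum_congr rfl fun y _ => ?_
    linear_combination h x * Q y x * hdb y x + ρ0 x * lam0 x y * h x * hQ x y
  have hdrift : ∑ x, ρ0 x * h x * forceDrift lam0 Q x
      = ∑ x, ∑ y, ρ0 x * lam0 x y * Q x y * h x := by
    refine sum_congr rfl fun x _ => ?_
    rw [forceDrift, mul_sum]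
    exact sum_congr rfl fun y _ => by ring
  simp only [mul_sub, sum_sub_distrib, hswap, hdrift]
  ring

/-- Both sides equal `-½ ∑ γ (f y - f x)(g y - g x)`, the Dirichlet form. -/
lemma sum_mul_generator_comm (hdb : ∀ x y, ρ0 x * lam0 x y = ρ0 y * lam0 y x) (f g : Ω → ℝ) :
    ∑ x, ρ0 x * f x * generator lam0 g x = ∑ x, ρ0 x * g x * generator lam0 f x := by
  have hdirichlet := fun (f g : Ω → ℝ) =>
    sum_mul_antisymm_mul_sub hdb (Q := fun x y => g y - g x) (fun x y => by ring) f
  simp only [← generator_eq_forceDrift] at hdirichlet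
  have hsymm : ∑ x, ∑ y, ρ0 x * lam0 x y * (g y - g x) * (f x - f y)
      = ∑ x, ∑ y, ρ0 x * lam0 x y * (f y - f x) * (g x - g y) :=
    sum_congr rfl fun x _ => sum_congr rfl fun y _ => by ring
  linarith [hdirichlet f g, hdirichlet g f]

lemma sum_mul_current (hdb : ∀ x y, ρ0 x * lam0 x y = ρ0 y * lam0 y x)
    {Q : Ω → Ω → ℝ} (hQ : ∀ x y, Q x y = - Q y x) (P : Ω → Ω → ℝ) (h : Ω → ℝ) :
    ∑ x, ∑ y, Q x y * (ρ0 x * lam0 x y * (P x y + h x - h y))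
      = ∑ x, ∑ y, ρ0 x * lam0 x y * Q x y * P x y
        + 2 * ∑ x, ρ0 x * h x * forceDrift lam0 Q x := by
  rw [← sum_mul_antisymm_mul_sub hdb hQ h, ← sum_add_distrib]
  refine sum_congr rfl fun x _ => ?_
  rw [← sum_add_distrib]
  exact sum_congr rfl fun y _ => by ring

end Onsager

open Onsager in
theorem onsager_reciprocity_general
    {Ω : Type*} [Fintype Ω] [DecidableEq Ω]
    (lam0 : Ω → Ω → ℝ)
    (ρ0 : Ω → ℝ)
    (hdb : ∀ x y, ρ0 x * lam0 x y = ρ0 y * lam0 y x)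
    (F G : Ω → Ω → ℝ)
    (hF : ∀ x y, F x y = - F y x) (hG : ∀ x y, G x y = - G y x)
    (hF' hG' : Ω → ℝ)
    -- `h^F = L0⁻¹ w^F` on the zero-mean subspace, i.e. `L0 h^F = w^F`, `∑ ρ0 h^F = 0`
    (hhF : ∀ x, ∑ y ∈ Finset.univ.erase x, lam0 x y * (hF' y - hF' x)
        = ∑ y ∈ Finset.univ.erase x, lam0 x y * F x y)
    (hhG : ∀ x, ∑ y ∈ Finset.univ.erase x, lam0 x y * (hG' y - hG' x)
        = ∑ y ∈ Finset.univ.erase x, lam0 x y * G x y) :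
    (1 / 2) * ∑ x, ∑ y, G x y * (ρ0 x * lam0 x y * (F x y + hF' x - hF' y))
      = (1 / 2) * ∑ x, ∑ y, F x y * (ρ0 x * lam0 x y * (G x y + hG' x - hG' y)) := by
  rw [sum_mul_current hdb hG, sum_mul_current hdb hF,
    forceDrift_eq_generator_of_sum_erase hG hhG, forceDrift_eq_generator_of_sum_erase hF hhF,
    sum_mul_generator_comm hdb hF' hG']
  congr 2
  exact Finset.sum_congr rfl fun x _ => Finset.sum_congr rfl fun y _ => by ring

/-- Onsager reciprocity for the linear response currents
`j^F(x,y) = γ(x,y)(F(x,y) + h^F(x) − h^F(y))`, `h^F = L0^{-1} w^F`. -/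
theorem onsager_reciprocity
    {Ω : Type*} [Fintype Ω] [DecidableEq Ω]
    (lam0 : Ω → Ω → ℝ) (hlam0 : ∀ x y, 0 ≤ lam0 x y)
    (ρ0 : Ω → ℝ) (hρ0 : ∀ x, 0 < ρ0 x)
    (hdb : ∀ x y, ρ0 x * lam0 x y = ρ0 y * lam0 y x)
    (F G : Ω → Ω → ℝ)
    (hF : ∀ x y, F x y = - F y x) (hG : ∀ x y, G x y = - G y x)
    (hF' hG' : Ω → ℝ)
    -- `h^F = L0⁻¹ w^F` on the zero-mean subspace, i.e. `L0 h^F = w^F`, `∑ ρ0 h^F = 0`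
    (hhF : ∀ x, ∑ y ∈ Finset.univ.erase x, lam0 x y * (hF' y - hF' x)
        = ∑ y ∈ Finset.univ.erase x, lam0 x y * F x y)
    (hhG : ∀ x, ∑ y ∈ Finset.univ.erase x, lam0 x y * (hG' y - hG' x)
        = ∑ y ∈ Finset.univ.erase x, lam0 x y * G x y)
    (hFmean : ∑ x, ρ0 x * hF' x = 0) (hGmean : ∑ x, ρ0 x * hG' x = 0) :
    (1 / 2) * ∑ x, ∑ y, G x y * (ρ0 x * lam0 x y * (F x y + hF' x - hF' y))
      = (1 / 2) * ∑ x, ∑ y, F x y * (ρ0 x * lam0 x y * (G x y + hG' x - hG' y)) :=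
  onsager_reciprocity_general lam0 ρ0 hdb F G hF hG hF' hG' hhF hhG
end
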